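/- Stopping-time transfer along bicausal couplings: let π be a bicausal coupling between P, Q ∈ 𝒫_p(ℝ^T) and τ* a stopping time with respect to (ℱ_t^X). Then there exists a stopping time τ with respect to (ℱ_t^Y) such that E_Q[f(Y, τ(Y))] ≤ E_π[f(Y, τ*(X))], for any f : ℝ^T × {1,...,T} → ℝ with f(·,t) Borel and appropriately integrable and f(Y,t) ℱ_t^Y-measurable. Consequently s(Q) ≤ E_π[f(Y, τ*(X))] where s(Q) = inf_{τ∈ST} E_Q[f(X,τ)]. -/

import Mathlib

open MeasureTheory ProbabilityTheory Filter Set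

noncomputable section

abbrev PathSp (T : ℕ) := Fin T → ℝ

/-- σ-algebra generated by the first `t` coordinates `X_1,…,X_t` on path space. -/
def FX (T t : ℕ) : MeasurableSpace (PathSp T) :=
  ⨆ i : Fin T, ⨆ _ : (i : ℕ) < t, MeasurableSpace.comap (fun x => x i) inferInstance

def prodX (T t : ℕ) : MeasurableSpace (PathSp T × PathSp T) := (FX T t).comap Prod.fst

def prodY (T t : ℕ) : MeasurableSpace (PathSp T × PathSp T) := (FX T t).comap Prod.snd

def prodXY (T t : ℕ) : MeasurableSpace (PathSp T × PathSp T) := prodX T t ⊔ prodY T t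

def IsCoupling {T : ℕ} (π : Measure (PathSp T × PathSp T)) (P Q : Measure (PathSp T)) : Prop :=
  π.map Prod.fst = P ∧ π.map Prod.snd = Q

/-- Causality of a coupling: conditionally on `X_1,…,X_t`, the variables `Y_1,…,Y_t`
are independent of `X_1,…,X_T`. -/
def Causal (T : ℕ) (π : Measure (PathSp T × PathSp T)) : Prop :=
  ∀ t ≤ T, ∀ A : Set (PathSp T), MeasurableSet[FX T t] A →
    (π[fun z => A.indicator (fun _ => (1:ℝ)) z.2 | prodX T T]) =ᵐ[π]
    (π[fun z => A.indicator (fun _ => (1:ℝ)) z.2 | prodX T t])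

def Bicausal (T : ℕ) (π : Measure (PathSp T × PathSp T)) : Prop :=
  Causal T π ∧ ∀ t ≤ T, ∀ A : Set (PathSp T), MeasurableSet[FX T t] A →
    (π[fun z => A.indicator (fun _ => (1:ℝ)) z.1 | prodY T T]) =ᵐ[π]
    (π[fun z => A.indicator (fun _ => (1:ℝ)) z.1 | prodY T t])

/-- `P` has a finite `p`-th moment. -/
def FiniteMoment {T : ℕ} (p : ℝ) (P : Measure (PathSp T)) : Prop :=
  ∀ t : Fin T, MemLp (fun x => x t) (ENNReal.ofReal p) P

/-- The adapted Wasserstein distance of order `p`. -/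
def AW (T : ℕ) (p : ℝ) (P Q : Measure (PathSp T)) : ℝ :=
  sInf { r | ∃ π : Measure (PathSp T × PathSp T), IsCoupling π P Q ∧ Bicausal T π ∧
    r = (∑ t : Fin T, ∫ z, |z.1 t - z.2 t| ^ p ∂π) ^ (1 / p) }

/-- The closed ball of radius `r` around `P` in the adapted Wasserstein distance,
within the set of probability measures with finite `p`-th moment. -/
def AWball (T : ℕ) (p : ℝ) (P : Measure (PathSp T)) (r : ℝ) : Set (Measure (PathSp T)) :=
  { Q | IsProbabilityMeasure Q ∧ FiniteMoment p Q ∧ AW T p P Q ≤ r }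

/-- Partial derivative `∂_{x_t} f`. -/
def pd {T : ℕ} (f : PathSp T → ℝ) (x : PathSp T) (t : Fin T) : ℝ :=
  fderiv ℝ f x (Pi.single t 1)

/-- A stopping time of the canonical filtration, with values in `{1,…,T}`
(0-indexed as `Fin T`): `{τ ≤ t} ∈ ℱ_t^X`. -/
def IsStopping (T : ℕ) (τ : PathSp T → Fin T) : Prop :=
  ∀ t : Fin T, MeasurableSet[FX T ((t : ℕ) + 1)] {x | τ x ≤ t}

/-- Value `s(Q) = inf_{τ ∈ ST} E_Q[f(X,τ)]` of the optimal stopping problem. -/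
def stopval (T : ℕ) (f : PathSp T → Fin T → ℝ) (Q : Measure (PathSp T)) : ℝ :=
  sInf { v | ∃ τ : PathSp T → Fin T, IsStopping T τ ∧ v = ∫ x, f x (τ x) ∂Q }

/-!
Write `c_k(Y) = π(τ*(X) < k | Y₁, …, Y_k)`. Bicausality makes `c_k(Y)` also the conditional
probability of `{τ*(X) < k}` given `Y₁, …, Y_l` for every `l ≥ k`, so `k ↦ c_k(Y)` is almost
surely a distribution function on `{0, …, T}`, and conditioning on `Y₁, …, Y_{t+1}` gives
`E_π[f(Y, τ*(X))] = ∑ₜ E_π[f(Y, t) (c_{t+1}(Y) - c_t(Y))]`. For `u ∈ (0, 1]` the first `t` with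
`u ≤ c_{t+1}(Y)` is a stopping time `τ_u` of `Y`, and averaging `E[f(Y, τ_u(Y))]` over `u` uniform
on `(0, 1]` recovers that sum, so some `u` does no worse than the average.
-/

lemma FX_le_pi (T t : ℕ) : FX T t ≤ MeasurableSpace.pi :=
  iSup_le fun i => iSup_le fun _ => (measurable_pi_apply i).comap_le

lemma FX_mono (T : ℕ) : Monotone (FX T) := fun _ _ hst =>
  iSup₂_mono' fun i hi => ⟨i, hi.trans_le hst, le_rfl⟩

lemma prodY_le (T t : ℕ) : prodY T t ≤ (inferInstance : MeasurableSpace (PathSp T × PathSp T)) :=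
  (MeasurableSpace.comap_mono (FX_le_pi T t)).trans measurable_snd.comap_le

lemma prodY_mono (T : ℕ) : Monotone (prodY T) := fun _ _ hst =>
  MeasurableSpace.comap_mono (FX_mono T hst)

section Integration

variable {Ω : Type*} [mΩ : MeasurableSpace Ω] {μ : Measure Ω}

lemma Measurable.comp_prodMk_left_of_comap_snd {α β γ : Type*} {m : MeasurableSpace β}
    [MeasurableSpace γ] {g : α × β → γ} (hg : Measurable[m.comap Prod.snd] g) (a : α) :
    Measurable[m] fun y => g (a, y) :=
  hg.comp <| measurable_iff_comap_le.mpr <| by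
    rw [MeasurableSpace.comap_comp]; exact le_of_eq MeasurableSpace.comap_id

lemma MeasureTheory.Integrable.mul_indicator_one {β : Type*} {G : Ω → ℝ} (hG : Integrable G μ)
    {s : Ω → Set β} {g : Ω → β} (hm : Measurable fun ω => (s ω).indicator (1 : β → ℝ) (g ω)) :
    Integrable (fun ω => G ω * (s ω).indicator 1 (g ω)) μ :=
  hG.mul_bdd hm.aestronglyMeasurable <| ae_of_all _ fun ω =>
    (norm_indicator_le_norm_self (s := s ω) (f := 1) (a := g ω)).trans_eq norm_one

lemma integral_eq_sum_integral_mul_indicator {ι : Type*} [Fintype ι] {F : Ω → ι → ℝ}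
    {σ : Ω → ι} (hF : ∀ i, Integrable (F · i) μ) (hσ : ∀ i, MeasurableSet {ω | σ ω = i}) :
    ∫ ω, F ω (σ ω) ∂μ = ∑ i, ∫ ω, F ω i * {ω | σ ω = i}.indicator 1 ω ∂μ := by
  rw [← integral_finsetSum _ fun i _ => (hF i).mul_indicator_one (s := fun _ => {ω | σ ω = i})
    (g := fun ω => ω) (measurable_const.indicator (hσ i))]
  congr 1 with ω
  classical
  simp [Set.indicator_apply]

lemma integral_mul_condExp_of_stronglyMeasurable {m : MeasurableSpace Ω} (hm : m ≤ mΩ)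
    [SigmaFinite (μ.trim hm)] {g h : Ω → ℝ} (hg : StronglyMeasurable[m] g)
    (hgh : Integrable (g * h) μ) (hh : Integrable h μ) :
    ∫ ω, g ω * μ[h | m] ω ∂μ = ∫ ω, g ω * h ω ∂μ :=
  (integral_congr_ae (condExp_mul_of_stronglyMeasurable_left hg hgh hh)).symm.trans
    (integral_condExp hm)

lemma setIntegral_indicator_one_Ioc {s : Set ℝ} {a b : ℝ} (hab : a ≤ b) (hs : Ioc a b ⊆ s) :
    ∫ u in s, (Ioc a b).indicator 1 u = b - a := by
  rw [integral_indicator_one measurableSet_Ioc, measureReal_restrict_apply measurableSet_Ioc,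
    inter_eq_left.mpr hs, Real.volume_real_Ioc_of_le hab]

lemma measurable_indicator_Ioc {a b : Ω → ℝ} (ha : Measurable a) (hb : Measurable b) :
    Measurable fun p : ℝ × Ω => (Ioc (a p.2) (b p.2)).indicator (1 : ℝ → ℝ) p.1 :=
  measurable_const.indicator (s := {p : ℝ × Ω | a p.2 < p.1 ∧ p.1 ≤ b p.2})
    ((measurableSet_lt (ha.comp measurable_snd) measurable_fst).inter
      (measurableSet_le measurable_fst (hb.comp measurable_snd)))

lemma integral_Ioc_integral_mul_indicator_Ioc [SFinite μ] {G a b : Ω → ℝ} (hG : Integrable G μ)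
    (ha : Measurable a) (hb : Measurable b) (hab : ∀ᵐ ω ∂μ, 0 ≤ a ω ∧ a ω ≤ b ω ∧ b ω ≤ 1) :
    ∫ u in Ioc (0 : ℝ) 1, ∫ ω, G ω * (Ioc (a ω) (b ω)).indicator 1 u ∂μ =
      ∫ ω, G ω * (b ω - a ω) ∂μ := by
  rw [integral_integral_swap ((hG.comp_snd _).mul_indicator_one (measurable_indicator_Ioc ha hb))]
  refine integral_congr_ae ?_
  filter_upwards [hab] with ω ⟨ha0, hab, hb1⟩
  rw [integral_const_mul, setIntegral_indicator_one_Ioc hab (Ioc_subset_Ioc ha0 hb1)]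

end Integration

section StoppingTimes

variable {T : ℕ}

lemma isStopping_const (t : Fin T) : IsStopping T fun _ => t :=
  fun _ => MeasurableSet.const _

/-- `{τ ≤ k}` in the paper's 1-based time. -/
def stopBefore (τ : PathSp T → Fin T) (k : ℕ) : Set (PathSp T) := {x | (τ x : ℕ) < k}

lemma IsStopping.measurableSet_stopBefore {τ : PathSp T → Fin T} (hτ : IsStopping T τ) (k : ℕ) :
    MeasurableSet[FX T k] (stopBefore τ k) := by
  cases k with
  | zero => simp [stopBefore]
  | succ m =>
    by_cases hm : m < T
    · convert hτ ⟨m, hm⟩ using 1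
      ext x; simp [stopBefore, Fin.le_def]
    · convert @MeasurableSet.univ _ (FX T (m + 1)) using 1
      ext x; simp only [stopBefore, mem_ofPred_eq, mem_univ, iff_true]; have := (τ x).isLt; omega

lemma IsStopping.measurableSet_eq {τ : PathSp T → Fin T} (hτ : IsStopping T τ) (t : Fin T) :
    MeasurableSet {x | τ x = t} := by
  convert (FX_le_pi T _ _ (hτ.measurableSet_stopBefore (t + 1))).diff
    (FX_le_pi T _ _ (hτ.measurableSet_stopBefore t)) using 1
  ext x; simp only [stopBefore, Set.mem_sdiff, mem_ofPred_eq, Fin.ext_iff, not_lt]; omega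

end StoppingTimes

section QuantileTime

variable {Ω : Type*} {T : ℕ} [NeZero T]

open scoped Classical in
/-- For cumulative weights `0 = c 0 ≤ c 1 ≤ ⋯ ≤ c T = 1` and `u` uniform on `(0, 1]`, this takes
the value `t` with probability `c (t + 1) - c t`. -/
def quantileTime (c : Fin (T + 1) → Ω → ℝ) (u : ℝ) (ω : Ω) : Fin T :=
  Fin.find (fun t => u ≤ c t.succ ω ∨ t = ⊤) ⟨⊤, Or.inr rfl⟩

lemma quantileTime_eq_iff {c : Fin (T + 1) → Ω → ℝ} {ω : Ω} (hmono : Monotone (c · ω))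
    (h0 : c 0 ω = 0) (h1 : c (Fin.last T) ω = 1) {u : ℝ} (hu : u ∈ Ioc 0 1) (t : Fin T) :
    quantileTime c u ω = t ↔ u ∈ Ioc (c t.castSucc ω) (c t.succ ω) := by
  have hlast : ∀ s : Fin T, s = ⊤ → u ≤ c s.succ ω := by
    rintro s rfl
    rw [show (⊤ : Fin T).succ = Fin.last T by ext; simp [Fin.val_top], h1]
    exact hu.2
  rw [quantileTime, Fin.find_eq_iff]
  constructor
  · rintro ⟨ht, hbefore⟩
    refine ⟨?_, ht.elim id (hlast t)⟩
    rcases Fin.eq_zero_or_eq_succ t.castSucc with h | ⟨s, hs⟩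
    · rw [h, h0]; exact hu.1
    · rw [hs]
      exact not_le.mp (not_or.mp (hbefore s (Fin.succ_le_castSucc_iff.mp hs.ge))).1
  · rintro ⟨hlow, hup⟩
    refine ⟨Or.inl hup, fun s hst => not_or.mpr ⟨?_, (hst.trans_le le_top).ne⟩⟩
    exact not_le.mpr (lt_of_le_of_lt (hmono (Fin.succ_le_castSucc_iff.mpr hst)) hlow)

lemma isStopping_quantileTime {c : Fin (T + 1) → PathSp T → ℝ}
    (hc : ∀ k : Fin (T + 1), Measurable[FX T k] (c k)) (u : ℝ) :
    IsStopping T (quantileTime c u) := by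
  intro s
  simp only [quantileTime, Fin.find_le_iff, ofPred_exists]
  refine MeasurableSet.iUnion fun r => ?_
  by_cases hrs : r ≤ s
  · simp only [hrs, true_and, ofPred_or]
    exact (FX_mono T (by simpa using hrs) _ (hc r.succ measurableSet_Ici)).union
      (MeasurableSet.const _)
  · simp [hrs]

theorem exists_integral_quantileTime_le [MeasurableSpace Ω] {μ : Measure Ω} [SFinite μ]
    {F : Ω → Fin T → ℝ} {c : Fin (T + 1) → Ω → ℝ} (hF : ∀ t, Integrable (F · t) μ)
    (hc : ∀ k, Measurable (c k))
    (hcdf : ∀ᵐ ω ∂μ, Monotone (c · ω) ∧ c 0 ω = 0 ∧ c (Fin.last T) ω = 1) :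
    ∃ u ∈ Ioc (0 : ℝ) 1, ∫ ω, F ω (quantileTime c u ω) ∂μ ≤
      ∑ t, ∫ ω, F ω t * (c t.succ ω - c t.castSucc ω) ∂μ := by
  set ν := volume.restrict (Ioc (0 : ℝ) 1)
  have : IsProbabilityMeasure ν := ⟨by simp [ν]⟩
  set S : Fin T → ℝ → Ω → ℝ :=
    fun t u ω => F ω t * (Ioc (c t.castSucc ω) (c t.succ ω)).indicator 1 u
  have hS : ∀ t, Integrable (fun p : ℝ × Ω => S t p.1 p.2) (ν.prod μ) := fun t =>
    ((hF t).comp_snd ν).mul_indicator_one (measurable_indicator_Ioc (hc _) (hc _))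
  have hSu : ∀ t u, Integrable (S t u) μ := fun t u =>
    (hF t).mul_indicator_one ((measurable_indicator_Ioc (hc _) (hc _)).comp measurable_prodMk_left)
  have hsplit : ∀ u ∈ Ioc (0 : ℝ) 1,
      ∫ ω, F ω (quantileTime c u ω) ∂μ = ∑ t, ∫ ω, S t u ω ∂μ := by
    intro u hu
    rw [← integral_finsetSum _ fun t _ => hSu t u]
    refine integral_congr_ae ?_
    filter_upwards [hcdf] with ω ⟨hmono, h0, h1⟩
    simp only [S, indicator_apply, ← quantileTime_eq_iff hmono h0 h1 hu, Pi.one_apply, mul_ite,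
      mul_one, mul_zero, Finset.sum_ite_eq, Finset.mem_univ, if_true]
  have hmean : ∫ u, ∑ t, ∫ ω, S t u ω ∂μ ∂ν =
      ∑ t, ∫ ω, F ω t * (c t.succ ω - c t.castSucc ω) ∂μ := by
    rw [integral_finsetSum _ fun t _ => (hS t).integral_prod_left]
    refine Finset.sum_congr rfl fun t _ =>
      integral_Ioc_integral_mul_indicator_Ioc (hF t) (hc _) (hc _) ?_
    filter_upwards [hcdf] with ω ⟨hmono, h0, h1⟩
    exact ⟨h0 ▸ hmono (Fin.zero_le _), hmono t.castSucc_le_succ, h1 ▸ hmono (Fin.le_last _)⟩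
  obtain ⟨u, hu, hle⟩ := exists_notMem_null_le_integral
    (integrable_finsetSum Finset.univ fun t _ => (hS t).integral_prod_left)
    (N := (Ioc (0 : ℝ) 1)ᶜ) (by simp [ν])
  rw [notMem_compl_iff] at hu
  exact ⟨u, hu, (hsplit u hu).trans_le (hle.trans_eq hmean)⟩

end QuantileTime

section StopProb

variable {T : ℕ} {π : Measure (PathSp T × PathSp T)} {τ : PathSp T → Fin T}

def stopProb (π : Measure (PathSp T × PathSp T)) (τ : PathSp T → Fin T) (k : ℕ) :
    PathSp T × PathSp T → ℝ :=
  π[fun z => (stopBefore τ k).indicator (fun _ => (1 : ℝ)) z.1 | prodY T k]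

/-- `stopProb` depends only on the `Y`-path; this is its section at `X = 0`. -/
def stopProbY (π : Measure (PathSp T × PathSp T)) (τ : PathSp T → Fin T) (k : ℕ)
    (y : PathSp T) : ℝ :=
  stopProb π τ k (0, y)

lemma stopProb_eq_stopProbY (k : ℕ) (z : PathSp T × PathSp T) :
    stopProb π τ k z = stopProbY π τ k z.2 :=
  Measurable.factorsThrough (mY := FX T k) stronglyMeasurable_condExp.measurable
    (show z.2 = (0, z.2).2 from rfl)

lemma measurable_stopProbY (k : ℕ) : Measurable[FX T k] (stopProbY π τ k) :=
  (stronglyMeasurable_condExp (m := (FX T k).comap Prod.snd)).measurable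
    |>.comp_prodMk_left_of_comap_snd 0

lemma integrable_indicator_stopBefore [IsFiniteMeasure π] (hτ : IsStopping T τ) (k : ℕ) :
    Integrable (fun z => (stopBefore τ k).indicator (fun _ => (1 : ℝ)) z.1) π :=
  (integrable_const 1).indicator (measurable_fst (FX_le_pi T k _ (hτ.measurableSet_stopBefore k)))

lemma condExp_indicator_stopBefore [IsFiniteMeasure π] (hbc : Bicausal T π)
    (hτ : IsStopping T τ) {k l : ℕ} (hkl : k ≤ l) (hl : l ≤ T) :
    π[fun z => (stopBefore τ k).indicator (fun _ => (1 : ℝ)) z.1 | prodY T l] =ᵐ[π]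
      stopProb π τ k :=
  calc _ =ᵐ[π] π[π[fun z => (stopBefore τ k).indicator (fun _ => (1 : ℝ)) z.1 | prodY T T] |
          prodY T l] := (condExp_condExp_of_le (prodY_mono T hl) (prodY_le T T)).symm
    _ =ᵐ[π] π[stopProb π τ k | prodY T l] :=
        condExp_congr_ae (hbc.2 k (hkl.trans hl) _ (hτ.measurableSet_stopBefore k))
    _ = stopProb π τ k := condExp_of_stronglyMeasurable (prodY_le T l)
        (stronglyMeasurable_condExp.mono (prodY_mono T hkl)) integrable_condExp

lemma stopProb_zero : stopProb π τ 0 = 0 := by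
  simp only [stopProb, stopBefore, Nat.not_lt_zero, ofPred_false, indicator_empty]
  exact condExp_zero

lemma stopProb_self [IsFiniteMeasure π] : stopProb π τ T = 1 := by
  have : stopBefore τ T = univ := eq_univ_of_forall fun x => (τ x).isLt
  simp only [stopProb, this, indicator_univ]
  exact condExp_const (prodY_le T T) 1

lemma stopProb_mono_ae [IsFiniteMeasure π] (hbc : Bicausal T π) (hτ : IsStopping T τ)
    {k l : ℕ} (hkl : k ≤ l) (hl : l ≤ T) : stopProb π τ k ≤ᵐ[π] stopProb π τ l := by
  have hsub : stopBefore τ k ⊆ stopBefore τ l := fun x (hx : _ < k) => hx.trans_le hkl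
  refine (condExp_indicator_stopBefore hbc hτ hkl hl).symm.trans_le ?_
  exact condExp_mono (integrable_indicator_stopBefore hτ k) (integrable_indicator_stopBefore hτ l)
    (ae_of_all _ fun z => indicator_le_indicator_of_subset hsub (fun _ => zero_le_one) _)

lemma ae_monotone_stopProbY [IsFiniteMeasure π] (hbc : Bicausal T π) (hτ : IsStopping T τ) :
    ∀ᵐ z ∂π, Monotone (fun k : Fin (T + 1) => stopProbY π τ k z.2) ∧
      stopProbY π τ (0 : Fin (T + 1)) z.2 = 0 ∧ stopProbY π τ (Fin.last T) z.2 = 1 := by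
  have hmono : ∀ᵐ z ∂π, ∀ k l : Fin (T + 1), k ≤ l → stopProb π τ k z ≤ stopProb π τ l z := by
    simp only [ae_all_iff]
    intro k l hkl
    exact stopProb_mono_ae hbc hτ hkl (Nat.lt_succ_iff.mp l.isLt)
  filter_upwards [hmono] with z hz
  simp only [← stopProb_eq_stopProbY, Fin.val_zero, Fin.val_last, stopProb_zero, stopProb_self]
  exact ⟨hz, rfl, rfl⟩

lemma condExp_indicator_eq_sub_stopProb [IsFiniteMeasure π] (hbc : Bicausal T π)
    (hτ : IsStopping T τ) (t : Fin T) :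
    π[{z | τ z.1 = t}.indicator 1 | prodY T (t + 1)] =ᵐ[π]
      stopProb π τ (t + 1) - stopProb π τ t := by
  have hdiff : {z : PathSp T × PathSp T | τ z.1 = t}.indicator 1 =
      (fun z => (stopBefore τ (t + 1)).indicator (fun _ => (1 : ℝ)) z.1) -
        fun z => (stopBefore τ t).indicator (fun _ => (1 : ℝ)) z.1 := by
    ext z
    simp only [indicator_apply, stopBefore, mem_ofPred_eq, Pi.sub_apply, Pi.one_apply, Fin.ext_iff]
    split_ifs <;> (try norm_num) <;> omega
  rw [hdiff]
  filter_upwards [condExp_sub (m := prodY T (t + 1)) (integrable_indicator_stopBefore hτ _)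
      (integrable_indicator_stopBefore hτ _),
    condExp_indicator_stopBefore hbc hτ (Nat.le_succ t) t.isLt] with z hsub htower
  rw [hsub, Pi.sub_apply, Pi.sub_apply, htower]
  rfl

theorem integral_comp_stopping_eq_sum [IsFiniteMeasure π] (hbc : Bicausal T π)
    (hτ : IsStopping T τ) {f : PathSp T → Fin T → ℝ}
    (hfadapted : ∀ t : Fin T, Measurable[FX T ((t : ℕ) + 1)] fun x => f x t)
    (hf : ∀ t, Integrable (fun z => f z.2 t) π) :
    ∫ z, f z.2 (τ z.1) ∂π =
      ∑ t : Fin T, ∫ z, f z.2 t * (stopProbY π τ (t + 1) z.2 - stopProbY π τ t z.2) ∂π := by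
  have hlevel : ∀ t, MeasurableSet {z : PathSp T × PathSp T | τ z.1 = t} := fun t =>
    measurable_fst (hτ.measurableSet_eq t)
  rw [integral_eq_sum_integral_mul_indicator hf hlevel]
  refine Finset.sum_congr rfl fun t _ => ?_
  have hind : Integrable ({z | τ z.1 = t}.indicator (1 : PathSp T × PathSp T → ℝ)) π :=
    (integrable_const 1).indicator (hlevel t)
  have hfY : StronglyMeasurable[prodY T (t + 1)] fun z : PathSp T × PathSp T => f z.2 t :=
    ((hfadapted t).comp (comap_measurable Prod.snd)).stronglyMeasurable
  rw [← integral_mul_condExp_of_stronglyMeasurable (prodY_le T (t + 1)) hfY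
    ((hf t).mul_indicator_one (measurable_const.indicator (hlevel t))) hind]
  refine integral_congr_ae ?_
  filter_upwards [condExp_indicator_eq_sub_stopProb hbc hτ t] with z hz
  rw [hz, Pi.sub_apply, stopProb_eq_stopProbY, stopProb_eq_stopProbY]

end StopProb

lemma stopval_le_integral {T : ℕ} {f : PathSp T → Fin T → ℝ} {Q : Measure (PathSp T)}
    (hint : ∀ τ : PathSp T → Fin T, IsStopping T τ → Integrable (fun y => f y (τ y)) Q)
    {τ : PathSp T → Fin T} (hτ : IsStopping T τ) : stopval T f Q ≤ ∫ y, f y (τ y) ∂Q := by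
  refine csInf_le ⟨-∫ y, ∑ t, |f y t| ∂Q, ?_⟩ ⟨τ, hτ, rfl⟩
  rintro _ ⟨σ, hσ, rfl⟩
  rw [← integral_neg]
  refine integral_mono (integrable_finsetSum _ fun t _ => (hint _ (isStopping_const t)).abs).neg
    (hint σ hσ) fun y => ?_
  have := Finset.single_le_sum (fun t _ => abs_nonneg (f y t)) (Finset.mem_univ (σ y))
  linarith [neg_abs_le (f y (σ y))]

theorem stopping_time_transfer_general
    (T : ℕ)
    (P Q : Measure (PathSp T))
    (π : Measure (PathSp T × PathSp T)) [IsProbabilityMeasure π]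
    (hπ : IsCoupling π P Q) (hbc : Bicausal T π)
    (τS : PathSp T → Fin T) (hτS : IsStopping T τS)
    (f : PathSp T → Fin T → ℝ)
    (hfadapted : ∀ t : Fin T, Measurable[FX T ((t : ℕ) + 1)] fun x => f x t)
    (hint2 : ∀ τ : PathSp T → Fin T, IsStopping T τ →
      Integrable (fun y => f y (τ y)) Q) :
    (∃ τ : PathSp T → Fin T, IsStopping T τ ∧
        (∫ y, f y (τ y) ∂Q) ≤ ∫ z, f z.2 (τS z.1) ∂π) ∧
      stopval T f Q ≤ ∫ z, f z.2 (τS z.1) ∂π := by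
  have : NeZero T := ⟨(τS 0).pos.ne'⟩
  have hintπ : ∀ τ, IsStopping T τ → Integrable (fun z => f z.2 (τ z.2)) π := fun τ hτ =>
    (integrable_map_measure (hπ.2 ▸ hint2 τ hτ).aestronglyMeasurable
      measurable_snd.aemeasurable).mp (hπ.2 ▸ hint2 τ hτ)
  set c : Fin (T + 1) → PathSp T → ℝ := fun k => stopProbY π τS k
  obtain ⟨u, -, hu⟩ := exists_integral_quantileTime_le (μ := π)
    (F := fun z t => f z.2 t) (c := fun k z => c k z.2) (fun t => hintπ _ (isStopping_const t))
    (fun k => ((measurable_stopProbY k).mono (FX_le_pi T k) le_rfl).comp measurable_snd)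
    (ae_monotone_stopProbY hbc hτS)
  have hτ : IsStopping T (quantileTime c u) :=
    isStopping_quantileTime (fun k => measurable_stopProbY k) u
  have hle : ∫ y, f y (quantileTime c u y) ∂Q ≤ ∫ z, f z.2 (τS z.1) ∂π := by
    rw [← hπ.2, integral_map measurable_snd.aemeasurable (hπ.2 ▸ hint2 _ hτ).aestronglyMeasurable,
      integral_comp_stopping_eq_sum hbc hτS hfadapted fun t => hintπ _ (isStopping_const t)]
    exact hu
  exact ⟨⟨_, hτ, hle⟩, (stopval_le_integral hint2 hτ).trans hle⟩

/-- transfer of stopping times along a bicausal coupling: given a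
bicausal coupling π between P and Q and a stopping time τ*, there is a stopping
time τ with E_Q[f(Y,τ(Y))] ≤ E_π[f(Y,τ*(X))]; consequently s(Q) ≤ E_π[f(Y,τ*(X))]. -/
theorem stopping_time_transfer
    (T : ℕ) (hT : 0 < T) (p : ℝ) (hp : 1 < p)
    (P Q : Measure (PathSp T)) [IsProbabilityMeasure P] [IsProbabilityMeasure Q]
    (hPm : FiniteMoment p P) (hQm : FiniteMoment p Q)
    (π : Measure (PathSp T × PathSp T)) [IsProbabilityMeasure π]
    (hπ : IsCoupling π P Q) (hbc : Bicausal T π)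
    (τS : PathSp T → Fin T) (hτS : IsStopping T τS)
    (f : PathSp T → Fin T → ℝ)
    (hfadapted : ∀ t : Fin T, Measurable[FX T ((t : ℕ) + 1)] fun x => f x t)
    (hint1 : Integrable (fun z => f z.2 (τS z.1)) π)
    (hint2 : ∀ τ : PathSp T → Fin T, IsStopping T τ →
      Integrable (fun y => f y (τ y)) Q) :
    (∃ τ : PathSp T → Fin T, IsStopping T τ ∧
        (∫ y, f y (τ y) ∂Q) ≤ ∫ z, f z.2 (τS z.1) ∂π) ∧
      stopval T f Q ≤ ∫ z, f z.2 (τS z.1) ∂π :=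
  stopping_time_transfer_general T P Q π hπ hbc τS hτS f hfadapted hint2

end
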